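/- The normal regression model with a misclassified binary covariate is identified without knowledge of the reclassification probabilities, given the sign of the slope: let α₀, α₀' ∈ ℝ, α₁, α₁' > 0, σ, σ' > 0 and reclassification weights q₀, q₁, q₀', q₁' ∈ [0,1] with q₀ ∈ (0,1) and q₀' ∈ (0,1). If for each k ∈ {0,1} and every y ∈ ℝ, q_k · φ(y; α₀, σ) + (1 − q_k) · φ(y; α₀ + α₁, σ) = q'_k · φ(y; α₀', σ') + (1 − q'_k) · φ(y; α₀' + α₁', σ'), then α₀ = α₀', α₁ = α₁', σ = σ', q₀ = q₀' and q₁ = q₁'. -/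

import Mathlib

/-!
At `+∞` a Gaussian density with larger standard deviation, or with the same standard deviation
and larger mean, beats every other one by an exponentially growing factor. Comparing the dominant
terms of two equal two-component mixtures therefore identifies the top component and its weight;
what is left is a single component, identified the same way. Once the components are known, the
equation for `k = 1` determines `q 1`, since the two densities are linearly independent.
-/

/-- The Gaussian density with mean `μ` and standard deviation `σ > 0`. -/
noncomputable def gaussDensity (μ σ y : ℝ) : ℝ :=
  (σ * Real.sqrt (2 * Real.pi))⁻¹ * Real.exp (-(y - μ) ^ 2 / (2 * σ ^ 2))

open Filter Asymptotics Prod.Lex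

lemma gaussDensity_pos {σ : ℝ} (hσ : 0 < σ) (μ y : ℝ) : 0 < gaussDensity μ σ y := by
  unfold gaussDensity; positivity

lemma tendsto_quadratic_atTop {A B : ℝ} (h : 0 < A ∨ A = 0 ∧ 0 < B) (C : ℝ) :
    Tendsto (fun y => A * y ^ 2 + B * y + C) atTop atTop := by
  refine tendsto_atTop_add_const_right _ C ?_
  rcases h with hA | ⟨rfl, hB⟩
  · have hlin : Tendsto (fun y => A * y + B) atTop atTop :=
      tendsto_atTop_add_const_right _ B (tendsto_id.const_mul_atTop hA)
    exact (tendsto_id.atTop_mul_atTop₀ hlin).congr fun y => by simp only [id]; ring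
  · simpa using tendsto_id.const_mul_atTop hB

lemma gaussDensity_isLittleO_of_toLex_lt {μ μ' σ σ' : ℝ} (hσ : 0 < σ) (hσ' : 0 < σ')
    (h : toLex (σ, μ) < toLex (σ', μ')) :
    gaussDensity μ σ =o[atTop] gaussDensity μ' σ' := by
  have hcoeff : 0 < 1 / (2 * σ ^ 2) - 1 / (2 * σ' ^ 2) ∨
      1 / (2 * σ ^ 2) - 1 / (2 * σ' ^ 2) = 0 ∧ 0 < μ' / σ' ^ 2 - μ / σ ^ 2 := by
    rcases toLex_lt_toLex.mp h with hlt | ⟨rfl, hlt⟩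
    · left
      have : 2 * σ ^ 2 < 2 * σ' ^ 2 := by nlinarith
      rw [sub_pos]
      exact one_div_lt_one_div_of_lt (by positivity) this
    · exact Or.inr ⟨sub_self _, by rw [sub_pos]; exact div_lt_div_of_pos_right hlt (by positivity)⟩
  have hexp : (fun y => Real.exp (-(y - μ) ^ 2 / (2 * σ ^ 2))) =o[atTop]
      fun y => Real.exp (-(y - μ') ^ 2 / (2 * σ' ^ 2)) := by
    rw [Real.isLittleO_exp_comp_exp_comp]
    refine (tendsto_quadratic_atTop hcoeff (μ ^ 2 / (2 * σ ^ 2) - μ' ^ 2 / (2 * σ' ^ 2))).congr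
      fun y => ?_
    field_simp
    ring
  exact (hexp.const_mul_left _).const_mul_right (by positivity)

lemma gaussDensity_isLittleO_of_lt {μ μ' σ : ℝ} (hσ : 0 < σ) (h : μ < μ') :
    gaussDensity μ σ =o[atTop] gaussDensity μ' σ :=
  gaussDensity_isLittleO_of_toLex_lt hσ hσ (toLex_lt_toLex.mpr (Or.inr ⟨rfl, h⟩))

lemma eq_zero_of_const_mul_gaussDensity_isLittleO {c μ σ : ℝ} (hσ : 0 < σ)
    (h : (fun y => c * gaussDensity μ σ y) =o[atTop] gaussDensity μ σ) : c = 0 := by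
  by_contra hc
  have hne : ∃ᶠ y in atTop, gaussDensity μ σ y ≠ 0 :=
    Frequently.of_forall fun y => (gaussDensity_pos hσ μ y).ne'
  exact isLittleO_irrefl hne ((isLittleO_const_mul_left_iff hc).mp h)

section Mixture

variable {a₁ a₂ b₁ b₂ m₁ m₂ n₁ n₂ s t : ℝ}

lemma mixture_isLittleO_of_toLex_lt {n : ℝ} (hs : 0 < s) (ht : 0 < t)
    (h₁ : toLex (s, m₁) < toLex (t, n)) (h₂ : toLex (s, m₂) < toLex (t, n)) :
    (fun y => a₁ * gaussDensity m₁ s y + a₂ * gaussDensity m₂ s y) =o[atTop]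
      gaussDensity n t :=
  ((gaussDensity_isLittleO_of_toLex_lt hs ht h₁).const_mul_left a₁).add
    ((gaussDensity_isLittleO_of_toLex_lt hs ht h₂).const_mul_left a₂)

lemma top_coeff_eq_zero_of_toLex_lt (hs : 0 < s) (ht : 0 < t) (hm : m₁ < m₂) (hn : n₁ < n₂)
    (heq : ∀ y, a₁ * gaussDensity m₁ s y + a₂ * gaussDensity m₂ s y =
      b₁ * gaussDensity n₁ t y + b₂ * gaussDensity n₂ t y)
    (hlt : toLex (s, m₂) < toLex (t, n₂)) : b₂ = 0 := by
  refine eq_zero_of_const_mul_gaussDensity_isLittleO (μ := n₂) ht ?_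
  have hlhs := mixture_isLittleO_of_toLex_lt (a₁ := a₁) (a₂ := a₂) hs ht
    (lt_trans (toLex_lt_toLex.mpr (Or.inr ⟨rfl, hm⟩) : toLex (s, m₁) < toLex (s, m₂)) hlt) hlt
  have hlow := (gaussDensity_isLittleO_of_lt ht hn).const_mul_left b₁
  refine (hlhs.sub hlow).congr_left fun y => ?_
  rw [heq]
  ring

lemma mixture_top_component_eq (hs : 0 < s) (ht : 0 < t) (hm : m₁ < m₂) (hn : n₁ < n₂)
    (ha₂ : a₂ ≠ 0) (hb₂ : b₂ ≠ 0)
    (heq : ∀ y, a₁ * gaussDensity m₁ s y + a₂ * gaussDensity m₂ s y =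
      b₁ * gaussDensity n₁ t y + b₂ * gaussDensity n₂ t y) :
    s = t ∧ m₂ = n₂ ∧ a₂ = b₂ := by
  obtain ⟨rfl, rfl⟩ : s = t ∧ m₂ = n₂ := by
    rcases lt_trichotomy (toLex (s, m₂)) (toLex (t, n₂)) with hlt | heq' | hgt
    · exact absurd (top_coeff_eq_zero_of_toLex_lt hs ht hm hn heq hlt) hb₂
    · exact Prod.ext_iff.mp (toLex.injective heq')
    · exact absurd (top_coeff_eq_zero_of_toLex_lt ht hs hn hm (fun y => (heq y).symm) hgt) ha₂
  refine ⟨rfl, rfl, sub_eq_zero.mp (eq_zero_of_const_mul_gaussDensity_isLittleO (μ := m₂) hs ?_)⟩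
  refine (((gaussDensity_isLittleO_of_lt hs hn).const_mul_left b₁).sub
    ((gaussDensity_isLittleO_of_lt hs hm).const_mul_left a₁)).congr_left fun y => ?_
  linear_combination -heq y

lemma eq_zero_of_const_mul_gaussDensity_eq_of_lt (hs : 0 < s) (hm : m₁ < n₁)
    (heq : ∀ y, a₁ * gaussDensity m₁ s y = b₁ * gaussDensity n₁ s y) : b₁ = 0 :=
  eq_zero_of_const_mul_gaussDensity_isLittleO hs <|
    ((gaussDensity_isLittleO_of_lt hs hm).const_mul_left a₁).congr_left heq

lemma mean_eq_of_const_mul_gaussDensity_eq (hs : 0 < s) (ha : a₁ ≠ 0) (hb : b₁ ≠ 0)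
    (heq : ∀ y, a₁ * gaussDensity m₁ s y = b₁ * gaussDensity n₁ s y) : m₁ = n₁ := by
  rcases lt_trichotomy m₁ n₁ with hlt | heq' | hgt
  · exact absurd (eq_zero_of_const_mul_gaussDensity_eq_of_lt hs hlt heq) hb
  · exact heq'
  · exact absurd (eq_zero_of_const_mul_gaussDensity_eq_of_lt hs hgt fun y => (heq y).symm) ha

lemma mixture_coeff_eq (hs : 0 < s) (hm : m₁ < m₂)
    (heq : ∀ y, a₁ * gaussDensity m₁ s y + a₂ * gaussDensity m₂ s y =
      b₁ * gaussDensity m₁ s y + b₂ * gaussDensity m₂ s y) :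
    a₁ = b₁ ∧ a₂ = b₂ := by
  have h₂ : a₂ = b₂ := by
    refine sub_eq_zero.mp (eq_zero_of_const_mul_gaussDensity_isLittleO (μ := m₂) hs ?_)
    refine ((gaussDensity_isLittleO_of_lt hs hm).const_mul_left (b₁ - a₁)).congr_left
      fun y => ?_
    linear_combination -heq y
  subst h₂
  refine ⟨mul_right_cancel₀ (gaussDensity_pos hs m₁ 0).ne' ?_, rfl⟩
  linear_combination heq 0

end Mixture

theorem normal_misclassified_model_identified_general
    (α₀ α₀' α₁ α₁' σ σ' : ℝ) (hα₁ : 0 < α₁) (hα₁' : 0 < α₁')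
    (hσ : 0 < σ) (hσ' : 0 < σ')
    (q q' : Fin 2 → ℝ)
    (hq0 : q 0 ∈ Set.Ioo (0 : ℝ) 1) (hq0' : q' 0 ∈ Set.Ioo (0 : ℝ) 1)
    (heq : ∀ k : Fin 2, ∀ y : ℝ,
      q k * gaussDensity α₀ σ y + (1 - q k) * gaussDensity (α₀ + α₁) σ y =
        q' k * gaussDensity α₀' σ' y + (1 - q' k) * gaussDensity (α₀' + α₁') σ' y) :
    α₀ = α₀' ∧ α₁ = α₁' ∧ σ = σ' ∧ q 0 = q' 0 ∧ q 1 = q' 1 := by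
  obtain ⟨hq0_pos, hq0_lt_one⟩ := hq0
  obtain ⟨hq0'_pos, hq0'_lt_one⟩ := hq0'
  obtain ⟨rfl, htop, hweight⟩ := mixture_top_component_eq hσ hσ' (by linarith) (by linarith)
    (sub_ne_zero.mpr hq0_lt_one.ne') (sub_ne_zero.mpr hq0'_lt_one.ne') (heq 0)
  have heq₀ := heq 0
  rw [htop] at heq₀
  obtain rfl : α₀ = α₀' := mean_eq_of_const_mul_gaussDensity_eq hσ hq0_pos.ne' hq0'_pos.ne'
    fun y => by linear_combination heq₀ y - gaussDensity (α₀' + α₁') σ y * hweight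
  obtain rfl : α₁ = α₁' := by linarith
  exact ⟨rfl, rfl, rfl, by linarith, (mixture_coeff_eq hσ (by linarith) (heq 1)).1⟩

/-- The normal regression model with a misclassified binary covariate is identified without
knowledge of the reclassification probabilities, given the sign of the slope: if the
two-component mixture densities (over the two observed covariate values `k ∈ {0,1}`) agree,
with positive slopes and with the `k = 0` reclassification weight strictly between 0 and 1,
then all parameters coincide. -/
theorem normal_misclassified_model_identified
    (α₀ α₀' α₁ α₁' σ σ' : ℝ) (hα₁ : 0 < α₁) (hα₁' : 0 < α₁')
    (hσ : 0 < σ) (hσ' : 0 < σ')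
    (q q' : Fin 2 → ℝ)
    (hq : ∀ k, q k ∈ Set.Icc (0 : ℝ) 1) (hq' : ∀ k, q' k ∈ Set.Icc (0 : ℝ) 1)
    (hq0 : q 0 ∈ Set.Ioo (0 : ℝ) 1) (hq0' : q' 0 ∈ Set.Ioo (0 : ℝ) 1)
    (heq : ∀ k : Fin 2, ∀ y : ℝ,
      q k * gaussDensity α₀ σ y + (1 - q k) * gaussDensity (α₀ + α₁) σ y =
        q' k * gaussDensity α₀' σ' y + (1 - q' k) * gaussDensity (α₀' + α₁') σ' y) :
    α₀ = α₀' ∧ α₁ = α₁' ∧ σ = σ' ∧ q 0 = q' 0 ∧ q 1 = q' 1 :=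
  normal_misclassified_model_identified_general α₀ α₀' α₁ α₁' σ σ' hα₁ hα₁' hσ hσ' q q' hq0 hq0' heq
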